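/- Let f : ℤ → ℤ be congruence preserving and let p be a prime number. Then the following four conditions are equivalent: (i) λ_f(p) ≠ p; (ii) the reduction f_p : ℤ/pℤ → ℤ/pℤ is not a cyclic permutation of length p; (iii) for every x ∈ ℤ/pℤ, the cycle length l_x of f_p at x satisfies l_x < p; (iv) α(λ_f(p)) < p. -/

import Mathlib

/-- `f : ℤ → ℤ` is congruence preserving if `n ∣ (s − t)` implies
`n ∣ (f(s) − f(t))` for every positive integer `n`. -/
def IsCongruencePreserving (f : ℤ → ℤ) : Prop :=
  ∀ (s t : ℤ) (n : ℕ), 0 < n → (n : ℤ) ∣ s - t → (n : ℤ) ∣ f s - f t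

/-- The reduction `f_m : ℤ/mℤ → ℤ/mℤ` of a map `f : ℤ → ℤ`. -/
def intReduction (f : ℤ → ℤ) (m : ℕ) : ZMod m → ZMod m :=
  fun x => ((f (x.val : ℤ) : ℤ) : ZMod m)

/-- The period of a self-map: the least positive `L` with `σ^[K+L] = σ^[K]`
for some `K`. -/
noncomputable def mapPeriod {F : Type*} (σ : F → F) : ℕ :=
  sInf {L : ℕ | 0 < L ∧ ∃ K : ℕ, σ^[K + L] = σ^[K]}

/-- The cycle length of `σ` at `a`. -/
noncomputable def cycleLength {F : Type*} (σ : F → F) (a : F) : ℕ :=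
  sInf {l : ℕ | 0 < l ∧ ∃ k : ℕ, σ^[k + l] a = σ^[k] a}

/-- `alpha n` is the largest prime power dividing `n`, with `alpha 1 = 1`. -/
noncomputable def alpha (n : ℕ) : ℕ :=
  sSup {m : ℕ | (m = 1 ∨ IsPrimePow m) ∧ m ∣ n}

/-- `σ` is a cyclic permutation of length `p` of its (finite) domain: it is a
bijection and the iterates of some element pass through all elements within
`p` steps. -/
def IsCyclicPermOfLength {F : Type*} (σ : F → F) (p : ℕ) : Prop :=
  Function.Bijective σ ∧ ∃ x : F, ∀ y : F, ∃ i : ℕ, i < p ∧ σ^[i] x = y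

/-!
For a self-map `σ` of a finite set, the orbit of `a` eventually enters a periodic orbit, and the
cycle length at `a` is the minimal period there. The period of `σ` is the lcm of the cycle lengths,
and a prime power dividing an lcm divides one of its terms, so every prime power dividing the period
divides some cycle length. On a set of prime size `p` every cycle length is at most `p`, and it
equals `p` exactly when one periodic orbit fills the whole set, i.e. when `σ` is a cyclic
permutation; then `σ^[p] = id` and the period is `p`. So each of the four conditions says that no
cycle length equals `p`.
-/

open Function Set

section EventualPeriod

variable {F : Type*} (σ : F → F)

theorem iterate_add_eq_iff_isPeriodicPt {a : F} {k l : ℕ} :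
    σ^[k + l] a = σ^[k] a ↔ IsPeriodicPt σ l (σ^[k] a) := by
  rw [add_comm, iterate_add_apply]
  rfl

variable {σ} in
theorem iterate_add_eq_of_le {a : F} {k K l : ℕ} (h : σ^[k + l] a = σ^[k] a) (hkK : k ≤ K) :
    σ^[K + l] a = σ^[K] a := by
  rw [iterate_add_eq_iff_isPeriodicPt] at h ⊢
  simpa only [← iterate_add_apply, Nat.sub_add_cancel hkK] using h.apply_iterate (K - k)

theorem exists_iterate_mem_periodicPts [Finite F] (a : F) : ∃ k, σ^[k] a ∈ periodicPts σ := by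
  obtain ⟨m, n, heq, hne⟩ : ∃ m n, σ^[m] a = σ^[n] a ∧ m ≠ n := by
    simpa [Injective] using not_injective_infinite_finite (σ^[·] a)
  wlog hmn : m < n generalizing m n
  · exact this n m heq.symm hne.symm (by omega)
  refine ⟨m, mk_mem_periodicPts (n := n - m) (by omega) ?_⟩
  rw [← iterate_add_eq_iff_isPeriodicPt, Nat.add_sub_cancel' hmn.le, heq]

variable {σ}

theorem exists_iterate_add_eq_iff_minimalPeriod_dvd {a : F} {k : ℕ}
    (hk : σ^[k] a ∈ periodicPts σ) (l : ℕ) :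
    (∃ k', σ^[k' + l] a = σ^[k'] a) ↔ minimalPeriod σ (σ^[k] a) ∣ l := by
  constructor
  · rintro ⟨k', h⟩
    have hK : σ^[k' + k + l] a = σ^[k' + k] a := iterate_add_eq_of_le h (by omega)
    rw [iterate_add_eq_iff_isPeriodicPt, iterate_add_apply] at hK
    rw [← minimalPeriod_apply_iterate hk k']
    exact hK.minimalPeriod_dvd
  · intro h
    exact ⟨k, (iterate_add_eq_iff_isPeriodicPt σ).mpr (isPeriodicPt_iff_minimalPeriod_dvd.mpr h)⟩

theorem cycleLength_eq_minimalPeriod {a : F} {k : ℕ} (hk : σ^[k] a ∈ periodicPts σ) :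
    cycleLength σ a = minimalPeriod σ (σ^[k] a) := by
  have hset : {l : ℕ | 0 < l ∧ ∃ k', σ^[k' + l] a = σ^[k'] a} =
      {l | 0 < l ∧ minimalPeriod σ (σ^[k] a) ∣ l} :=
    Set.ext fun l => and_congr_right fun _ => exists_iterate_add_eq_iff_minimalPeriod_dvd hk l
  have hpos := minimalPeriod_pos_of_mem_periodicPts hk
  rw [cycleLength, hset]
  exact le_antisymm (Nat.sInf_le ⟨hpos, dvd_rfl⟩)
    (le_csInf ⟨_, hpos, dvd_rfl⟩ fun l ⟨hl, hdvd⟩ => Nat.le_of_dvd hl hdvd)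

variable [Finite F]

theorem cycleLength_dvd_iff {a : F} {l : ℕ} :
    cycleLength σ a ∣ l ↔ ∃ k, σ^[k + l] a = σ^[k] a := by
  obtain ⟨k, hk⟩ := exists_iterate_mem_periodicPts σ a
  rw [cycleLength_eq_minimalPeriod hk, exists_iterate_add_eq_iff_minimalPeriod_dvd hk]

theorem cycleLength_pos (a : F) : 0 < cycleLength σ a := by
  obtain ⟨k, hk⟩ := exists_iterate_mem_periodicPts σ a
  rw [cycleLength_eq_minimalPeriod hk]
  exact minimalPeriod_pos_of_mem_periodicPts hk

theorem cycleLength_le_card (a : F) : cycleLength σ a ≤ Nat.card F := by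
  have := Fintype.ofFinite F
  obtain ⟨k, hk⟩ := exists_iterate_mem_periodicPts σ a
  rw [cycleLength_eq_minimalPeriod hk, Nat.card_eq_fintype_card]
  exact minimalPeriod_le_card

end EventualPeriod

section MapPeriod

variable {F : Type*} (σ : F → F)

theorem iterate_comp_left_id (n : ℕ) : (σ ∘ ·)^[n] id = σ^[n] := by
  induction n with
  | zero => rfl
  | succ n ih => rw [iterate_succ_apply', ih, ← iterate_succ']

theorem mapPeriod_eq_cycleLength_comp_left : mapPeriod σ = cycleLength (σ ∘ ·) id := by
  simp only [mapPeriod, cycleLength, iterate_comp_left_id]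

variable [Finite F]

theorem mapPeriod_dvd_iff {L : ℕ} : mapPeriod σ ∣ L ↔ ∃ K, σ^[K + L] = σ^[K] := by
  simp only [mapPeriod_eq_cycleLength_comp_left, cycleLength_dvd_iff, iterate_comp_left_id]

theorem cycleLength_dvd_mapPeriod (a : F) : cycleLength σ a ∣ mapPeriod σ := by
  obtain ⟨K, hK⟩ := (mapPeriod_dvd_iff σ).mp dvd_rfl
  exact cycleLength_dvd_iff.mpr ⟨K, congrFun hK a⟩

theorem mapPeriod_dvd_of_forall_cycleLength_dvd {L : ℕ} (h : ∀ a, cycleLength σ a ∣ L) :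
    mapPeriod σ ∣ L := by
  choose k hk using fun a => cycleLength_dvd_iff.mp (h a)
  obtain ⟨K, hK⟩ := (Set.finite_range k).bddAbove
  exact (mapPeriod_dvd_iff σ).mpr
    ⟨K, funext fun a => iterate_add_eq_of_le (hk a) (hK (mem_range_self a))⟩

end MapPeriod

theorem mapPeriod_eq_lcm_cycleLength {F : Type*} [Fintype F] (σ : F → F) :
    mapPeriod σ = Finset.univ.lcm (cycleLength σ) :=
  Nat.dvd_antisymm
    (mapPeriod_dvd_of_forall_cycleLength_dvd σ fun _ => Finset.dvd_lcm (Finset.mem_univ _))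
    (Finset.lcm_dvd fun a _ => cycleLength_dvd_mapPeriod σ a)

section PrimePow

theorem IsPrimePow.dvd_or_dvd_of_dvd_lcm {q a b : ℕ} (hq : IsPrimePow q) (h : q ∣ Nat.lcm a b) :
    q ∣ a ∨ q ∣ b := by
  rcases eq_or_ne a 0 with rfl | ha
  · exact Or.inl (dvd_zero q)
  rcases eq_or_ne b 0 with rfl | hb
  · exact Or.inr (dvd_zero q)
  obtain ⟨r, i, hr, -, rfl⟩ := (isPrimePow_nat_iff q).mp hq
  simp only [hr.pow_dvd_iff_le_factorization ha, hr.pow_dvd_iff_le_factorization hb,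
    hr.pow_dvd_iff_le_factorization (Nat.lcm_ne_zero ha hb), Nat.factorization_lcm ha hb,
    Finsupp.sup_apply] at h ⊢
  exact le_sup_iff.mp h

theorem IsPrimePow.exists_dvd_of_dvd_finset_lcm {ι : Type*} {q : ℕ} {s : Finset ι} {g : ι → ℕ}
    (hq : IsPrimePow q) (h : q ∣ s.lcm g) : ∃ i ∈ s, q ∣ g i := by
  classical
  induction s using Finset.induction_on with
  | empty => exact absurd (Nat.dvd_one.mp h) hq.ne_one
  | insert a s _ ih =>
    rw [Finset.lcm_insert] at h
    rcases hq.dvd_or_dvd_of_dvd_lcm h with ha | hs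
    · exact ⟨a, Finset.mem_insert_self a s, ha⟩
    · obtain ⟨i, hi, hdvd⟩ := ih hs
      exact ⟨i, Finset.mem_insert_of_mem hi, hdvd⟩

theorem exists_dvd_cycleLength_of_isPrimePow {F : Type*} [Finite F] (σ : F → F) {q : ℕ}
    (hq : IsPrimePow q) (h : q ∣ mapPeriod σ) : ∃ a, q ∣ cycleLength σ a := by
  have := Fintype.ofFinite F
  rw [mapPeriod_eq_lcm_cycleLength] at h
  obtain ⟨a, -, ha⟩ := hq.exists_dvd_of_dvd_finset_lcm h
  exact ⟨a, ha⟩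

theorem alpha_prime {p : ℕ} (hp : p.Prime) : alpha p = p := by
  have hmem : p ∈ {m : ℕ | (m = 1 ∨ IsPrimePow m) ∧ m ∣ p} := ⟨Or.inr hp.isPrimePow, dvd_rfl⟩
  exact le_antisymm (csSup_le ⟨p, hmem⟩ fun m hm => Nat.le_of_dvd hp.pos hm.2)
    (le_csSup ⟨p, fun m hm => Nat.le_of_dvd hp.pos hm.2⟩ hmem)

theorem alpha_lt {n c : ℕ} (hc : 1 < c) (h : ∀ q, IsPrimePow q → q ∣ n → q < c) :
    alpha n < c := by
  suffices alpha n ≤ c - 1 by omega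
  refine csSup_le ⟨1, Or.inl rfl, one_dvd n⟩ ?_
  rintro m ⟨rfl | hm, hdvd⟩
  · omega
  · have := h m hm hdvd
    omega

end PrimePow

section FullCycle

variable {F : Type*} [Finite F] {σ : F → F} {p : ℕ}

theorem exists_iterate_eq_of_minimalPeriod_eq_card {y : F} (hy : minimalPeriod σ y = Nat.card F)
    (z : F) : ∃ i < Nat.card F, σ^[i] y = z := by
  have hinj : Injective fun i : Fin (Nat.card F) => σ^[i] y := fun i j hij =>
    Fin.ext (iterate_injOn_Iio_minimalPeriod (by simp [hy]) (by simp [hy]) hij)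
  obtain ⟨i, hi⟩ := (hinj.bijective_of_nat_card_le (by simp)).surjective z
  exact ⟨i, i.isLt, hi⟩

theorem iterate_card_eq_id_of_minimalPeriod_eq_card {y : F}
    (hy : minimalPeriod σ y = Nat.card F) : σ^[Nat.card F] = id := by
  funext z
  obtain ⟨i, -, rfl⟩ := exists_iterate_eq_of_minimalPeriod_eq_card hy z
  exact (hy ▸ isPeriodicPt_minimalPeriod σ y).apply_iterate i

theorem isCyclicPermOfLength_card_of_minimalPeriod_eq_card {y : F}
    (hy : minimalPeriod σ y = Nat.card F) : IsCyclicPermOfLength σ (Nat.card F) := by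
  have hid := iterate_card_eq_id_of_minimalPeriod_eq_card hy
  have hinj : Injective σ := injective_iff_periodicPts_eq_univ.mpr <| eq_univ_of_forall fun z =>
    mk_mem_periodicPts (Nat.card_pos_iff.mpr ⟨⟨y⟩, ‹_›⟩) (congrFun hid z)
  exact ⟨Finite.injective_iff_bijective.mp hinj, y, exists_iterate_eq_of_minimalPeriod_eq_card hy⟩

theorem card_le_cycleLength_of_isCyclicPermOfLength (h : IsCyclicPermOfLength σ (Nat.card F)) :
    ∃ x, Nat.card F ≤ cycleLength σ x := by
  obtain ⟨hbij, x, hx⟩ := h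
  have hper : σ^[0] x ∈ periodicPts σ := hbij.injective.mem_periodicPts x
  have hpos := minimalPeriod_pos_of_mem_periodicPts hper
  have hsurj : Surjective fun i : Fin (minimalPeriod σ x) => σ^[i] x := fun z => by
    obtain ⟨i, -, rfl⟩ := hx z
    exact ⟨⟨i % minimalPeriod σ x, Nat.mod_lt i hpos⟩, iterate_mod_minimalPeriod_eq⟩
  refine ⟨x, ?_⟩
  rw [cycleLength_eq_minimalPeriod hper]
  simpa using Nat.card_le_card_of_surjective _ hsurj

theorem isCyclicPermOfLength_iff_exists_cycleLength_eq (hF : Nat.card F = p) :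
    IsCyclicPermOfLength σ p ↔ ∃ x, cycleLength σ x = p := by
  subst hF
  constructor
  · intro h
    obtain ⟨x, hx⟩ := card_le_cycleLength_of_isCyclicPermOfLength h
    exact ⟨x, le_antisymm (cycleLength_le_card x) hx⟩
  · rintro ⟨x, hx⟩
    obtain ⟨k, hk⟩ := exists_iterate_mem_periodicPts σ x
    rw [cycleLength_eq_minimalPeriod hk] at hx
    exact isCyclicPermOfLength_card_of_minimalPeriod_eq_card hx

theorem mapPeriod_eq_of_cycleLength_eq_card {x : F} (hx : cycleLength σ x = Nat.card F) :
    mapPeriod σ = Nat.card F := by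
  obtain ⟨k, hk⟩ := exists_iterate_mem_periodicPts σ x
  have hy : minimalPeriod σ (σ^[k] x) = Nat.card F := cycleLength_eq_minimalPeriod hk ▸ hx
  refine Nat.dvd_antisymm ((mapPeriod_dvd_iff σ).mpr ⟨0, ?_⟩) (hx ▸ cycleLength_dvd_mapPeriod σ x)
  simpa using iterate_card_eq_id_of_minimalPeriod_eq_card hy

theorem forall_cycleLength_lt_iff (hF : Nat.card F = p) :
    (∀ x, cycleLength σ x < p) ↔ ¬∃ x, cycleLength σ x = p := by
  subst hF
  simpa only [not_exists] using forall_congr' fun x => (cycleLength_le_card x).lt_iff_ne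

theorem mapPeriod_eq_iff_exists_cycleLength_eq (hF : Nat.card F = p) (hp : p.Prime) :
    mapPeriod σ = p ↔ ∃ x, cycleLength σ x = p := by
  subst hF
  refine ⟨fun h => ?_, fun ⟨x, hx⟩ => mapPeriod_eq_of_cycleLength_eq_card hx⟩
  obtain ⟨x, hx⟩ := exists_dvd_cycleLength_of_isPrimePow σ hp.isPrimePow (h ▸ dvd_rfl)
  exact ⟨x, le_antisymm (cycleLength_le_card x) (Nat.le_of_dvd (cycleLength_pos x) hx)⟩

theorem alpha_mapPeriod_lt_iff (hF : Nat.card F = p) (hp : p.Prime) :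
    alpha (mapPeriod σ) < p ↔ ∀ x, cycleLength σ x < p := by
  subst hF
  refine ⟨fun h x => (cycleLength_le_card x).lt_of_ne fun hx => ?_, fun h => ?_⟩
  · rw [mapPeriod_eq_of_cycleLength_eq_card hx, alpha_prime hp] at h
    exact lt_irrefl _ h
  · refine alpha_lt hp.one_lt fun q hq hdvd => ?_
    obtain ⟨x, hx⟩ := exists_dvd_cycleLength_of_isPrimePow σ hq hdvd
    exact (Nat.le_of_dvd (cycleLength_pos x) hx).trans_lt (h x)

end FullCycle

theorem stmt_10_general (f : ℤ → ℤ)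
    (p : ℕ) (hp : p.Prime) :
    [ mapPeriod (intReduction f p) ≠ p,
      ¬ IsCyclicPermOfLength (intReduction f p) p,
      ∀ x : ZMod p, cycleLength (intReduction f p) x < p,
      alpha (mapPeriod (intReduction f p)) < p ].TFAE := by
  have : NeZero p := ⟨hp.ne_zero⟩
  have hF : Nat.card (ZMod p) = p := Nat.card_zmod p
  have hcycle := mapPeriod_eq_iff_exists_cycleLength_eq (σ := intReduction f p) hF hp
  tfae_have 1 ↔ 2 := (hcycle.trans (isCyclicPermOfLength_iff_exists_cycleLength_eq hF).symm).not
  tfae_have 3 ↔ 1 := (forall_cycleLength_lt_iff hF).trans hcycle.not.symm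
  tfae_have 4 ↔ 3 := alpha_mapPeriod_lt_iff hF hp
  tfae_finish

theorem stmt_10 (f : ℤ → ℤ) (hf : IsCongruencePreserving f)
    (p : ℕ) (hp : p.Prime) :
    [ mapPeriod (intReduction f p) ≠ p,
      ¬ IsCyclicPermOfLength (intReduction f p) p,
      ∀ x : ZMod p, cycleLength (intReduction f p) x < p,
      alpha (mapPeriod (intReduction f p)) < p ].TFAE :=
  stmt_10_general f p hp
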